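/- Let F be a field, let a, b, c, d, k13, k14, k25, k26, k47, k57, k78, k79 ∈ F, and let ε1, …, ε9 be Booleans. Define vectors in F²: f̃1 = (a,b) if ε1 else 0; f̃2 = (c,d) if ε2 else 0; f̃3 = k13·f̃1 if ε3 else 0; f̃4 = k14·f̃1 if ε4 else 0; f̃5 = k25·f̃2 if ε5 else 0; f̃6 = k26·f̃2 if ε6 else 0; f̃7 = k47·f̃4 + k57·f̃5 if ε7 else 0; f̃8 = k78·f̃7 if ε8 else 0; f̃9 = k79·f̃7 if ε9 else 0. Then the matrix with columns (f̃3, f̃8) and the matrix with columns (f̃6, f̃9) are both invertible if and only if all nine ε1,…,ε9 are true, all eight coefficients k13, k14, k25, k26, k47, k57, k78, k79 are nonzero, and a·d − b·c ≠ 0. -/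
import Mathlib


/- Active global encoding kernels of the butterfly network with channel erasures:
`fᵢt` is the usual linear-combination value when the Boolean `eᵢ` (channel `eᵢ`
successful) is true, and the zero vector otherwise. The source kernel is
`K_s = [[a,c],[b,d]]`, i.e. `f1 = (a,b)ᵀ`, `f2 = (c,d)ᵀ`. -/

def f1t {F : Type*} [Field F] (a b : F) (e1 : Bool) : Fin 2 → F :=
  if e1 then ![a, b] else 0

def f2t {F : Type*} [Field F] (c d : F) (e2 : Bool) : Fin 2 → F :=
  if e2 then ![c, d] else 0

def f3t {F : Type*} [Field F] (a b k13 : F) (e1 e3 : Bool) : Fin 2 → F :=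
  if e3 then k13 • f1t a b e1 else 0

def f4t {F : Type*} [Field F] (a b k14 : F) (e1 e4 : Bool) : Fin 2 → F :=
  if e4 then k14 • f1t a b e1 else 0

def f5t {F : Type*} [Field F] (c d k25 : F) (e2 e5 : Bool) : Fin 2 → F :=
  if e5 then k25 • f2t c d e2 else 0

def f6t {F : Type*} [Field F] (c d k26 : F) (e2 e6 : Bool) : Fin 2 → F :=
  if e6 then k26 • f2t c d e2 else 0

def f7t {F : Type*} [Field F] (a b c d k14 k47 k25 k57 : F) (e1 e2 e4 e5 e7 : Bool) :
    Fin 2 → F :=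
  if e7 then k47 • f4t a b k14 e1 e4 + k57 • f5t c d k25 e2 e5 else 0

def f8t {F : Type*} [Field F] (a b c d k14 k47 k78 k25 k57 : F) (e1 e2 e4 e5 e7 e8 : Bool) :
    Fin 2 → F :=
  if e8 then k78 • f7t a b c d k14 k47 k25 k57 e1 e2 e4 e5 e7 else 0

def f9t {F : Type*} [Field F] (a b c d k14 k47 k79 k25 k57 : F) (e1 e2 e4 e5 e7 e9 : Bool) :
    Fin 2 → F :=
  if e9 then k79 • f7t a b c d k14 k47 k25 k57 e1 e2 e4 e5 e7 else 0

/- The erased decoding matrix at sink `t₁`: columns `f̃3` and `f̃8`. -/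
def Ft1t {F : Type*} [Field F] (a b c d k13 k14 k47 k78 k25 k57 : F)
    (e1 e2 e3 e4 e5 e7 e8 : Bool) : Matrix (Fin 2) (Fin 2) F :=
  !![f3t a b k13 e1 e3 0, f8t a b c d k14 k47 k78 k25 k57 e1 e2 e4 e5 e7 e8 0;
     f3t a b k13 e1 e3 1, f8t a b c d k14 k47 k78 k25 k57 e1 e2 e4 e5 e7 e8 1]

/- The erased decoding matrix at sink `t₂`: columns `f̃6` and `f̃9`. -/
def Ft2t {F : Type*} [Field F] (a b c d k14 k47 k79 k25 k57 k26 : F)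
    (e1 e2 e4 e5 e6 e7 e9 : Bool) : Matrix (Fin 2) (Fin 2) F :=
  !![f6t c d k26 e2 e6 0, f9t a b c d k14 k47 k79 k25 k57 e1 e2 e4 e5 e7 e9 0;
     f6t c d k26 e2 e6 1, f9t a b c d k14 k47 k79 k25 k57 e1 e2 e4 e5 e7 e9 1]

/- STATEMENT 7: the erased decoding matrices at sinks `t₁` (columns `f̃3`, `f̃8`) and
`t₂` (columns `f̃6`, `f̃9`) are both invertible iff all nine channels are successful,
all eight local encoding coefficients `k13, k14, k25, k26, k47, k57, k78, k79` are
nonzero, and `a*d - b*c ≠ 0`. -/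

lemma det1_eq {F : Type*} [Field F] (a b c d k13 k14 k47 k78 k25 k57 : F)
    (e1 e2 e3 e4 e5 e7 e8 : Bool) :
    (Ft1t a b c d k13 k14 k47 k78 k25 k57 e1 e2 e3 e4 e5 e7 e8).det =
      if e1 ∧ e2 ∧ e3 ∧ e5 ∧ e7 ∧ e8 then k13 * k25 * k57 * k78 * (a * d - b * c)
      else 0 := by
  cases e1 <;> cases e2 <;> cases e3 <;> cases e4 <;> cases e5 <;> cases e7 <;> cases e8 <;>
    simp only [Ft1t, Matrix.det_fin_two_of, f3t, f8t, f7t, f4t, f5t, f1t, f2t,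
      Pi.smul_apply, Pi.add_apply, Pi.zero_apply, smul_eq_mul, smul_zero,
      Matrix.cons_val_zero, Matrix.cons_val_one, Matrix.head_cons, mul_zero, zero_mul,
      sub_zero, zero_sub, sub_self, add_zero, zero_add, reduceIte, Bool.false_eq_true,
      false_and, and_false, true_and, and_true, if_true, if_false, and_self, neg_zero] <;>
    ring

lemma det2_eq {F : Type*} [Field F] (a b c d k14 k47 k79 k25 k57 k26 : F)
    (e1 e2 e4 e5 e6 e7 e9 : Bool) :
    (Ft2t a b c d k14 k47 k79 k25 k57 k26 e1 e2 e4 e5 e6 e7 e9).det =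
      if e1 ∧ e2 ∧ e4 ∧ e6 ∧ e7 ∧ e9 then k14 * k26 * k47 * k79 * (b * c - a * d)
      else 0 := by
  cases e1 <;> cases e2 <;> cases e4 <;> cases e5 <;> cases e6 <;> cases e7 <;> cases e9 <;>
    simp only [Ft2t, Matrix.det_fin_two_of, f6t, f9t, f7t, f4t, f5t, f1t, f2t,
      Pi.smul_apply, Pi.add_apply, Pi.zero_apply, smul_eq_mul, smul_zero,
      Matrix.cons_val_zero, Matrix.cons_val_one, Matrix.head_cons, mul_zero, zero_mul,
      sub_zero, zero_sub, sub_self, add_zero, zero_add, reduceIte, Bool.false_eq_true,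
      false_and, and_false, true_and, and_true, if_true, if_false, and_self, neg_zero] <;>
    ring

theorem butterfly_erased_both_invertible_iff
    (F : Type*) [Field F] (a b c d k13 k14 k25 k26 k47 k57 k78 k79 : F)
    (e1 e2 e3 e4 e5 e6 e7 e8 e9 : Bool) :
    (IsUnit (Ft1t a b c d k13 k14 k47 k78 k25 k57 e1 e2 e3 e4 e5 e7 e8) ∧
     IsUnit (Ft2t a b c d k14 k47 k79 k25 k57 k26 e1 e2 e4 e5 e6 e7 e9)) ↔
      (e1 = true ∧ e2 = true ∧ e3 = true ∧ e4 = true ∧ e5 = true ∧ e6 = true ∧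
       e7 = true ∧ e8 = true ∧ e9 = true) ∧
      (k13 ≠ 0 ∧ k14 ≠ 0 ∧ k25 ≠ 0 ∧ k26 ≠ 0 ∧ k47 ≠ 0 ∧ k57 ≠ 0 ∧ k78 ≠ 0 ∧ k79 ≠ 0) ∧
      a * d - b * c ≠ 0 := by
  rw [Matrix.isUnit_iff_isUnit_det, Matrix.isUnit_iff_isUnit_det, isUnit_iff_ne_zero,
    isUnit_iff_ne_zero, det1_eq, det2_eq]
  constructor
  · rintro ⟨h1, h2⟩
    by_cases c1 : e1 = true ∧ e2 = true ∧ e3 = true ∧ e5 = true ∧ e7 = true ∧ e8 = true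
    swap
    · rw [if_neg c1] at h1; exact absurd rfl h1
    by_cases c2 : e1 = true ∧ e2 = true ∧ e4 = true ∧ e6 = true ∧ e7 = true ∧ e9 = true
    swap
    · rw [if_neg c2] at h2; exact absurd rfl h2
    rw [if_pos c1] at h1
    rw [if_pos c2] at h2
    obtain ⟨he1, he2, he3, he5, he7, he8⟩ := c1
    obtain ⟨-, -, he4, he6, -, he9⟩ := c2
    refine ⟨⟨he1, he2, he3, he4, he5, he6, he7, he8, he9⟩, ⟨?_, ?_, ?_, ?_, ?_, ?_, ?_, ?_⟩, ?_⟩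
    · intro h; exact h1 (by rw [h]; ring)
    · intro h; exact h2 (by rw [h]; ring)
    · intro h; exact h1 (by rw [h]; ring)
    · intro h; exact h2 (by rw [h]; ring)
    · intro h; exact h2 (by rw [h]; ring)
    · intro h; exact h1 (by rw [h]; ring)
    · intro h; exact h1 (by rw [h]; ring)
    · intro h; exact h2 (by rw [h]; ring)
    · intro h; exact h1 (by rw [show a * d - b * c = 0 from h]; ring)
  · rintro ⟨⟨rfl, rfl, rfl, rfl, rfl, rfl, rfl, rfl, rfl⟩,
      ⟨h13, h14, h25, h26, h47, h57, h78, h79⟩, had⟩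
    rw [if_pos ⟨rfl, rfl, rfl, rfl, rfl, rfl⟩, if_pos ⟨rfl, rfl, rfl, rfl, rfl, rfl⟩]
    exact ⟨mul_ne_zero (mul_ne_zero (mul_ne_zero (mul_ne_zero h13 h25) h57) h78) had,
      mul_ne_zero (mul_ne_zero (mul_ne_zero (mul_ne_zero h14 h26) h47) h79)
        (fun h => had (by linear_combination -h))⟩
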